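/- Let H = L + D as above correspond to a graph Ḡ with leader node 0 reachable to all other nodes. Then every eigenvalue of H has strictly positive real part. -/

import Mathlib

/-!
At an entry of maximal modulus of an eigenvector for an eigenvalue `μ` with `Re μ ≤ 0`,
the eigenvalue equation of that row of `H` forces equality in the Geršgorin estimate:
the row has no leader edge and every in-neighbour of the node is again an entry of maximal
modulus. So the set of maximal nodes is closed under predecessors in the extended graph;
since it is nonempty and every node is reachable from the leader, it would contain the
leader, which has no row.
-/

open Matrix Finset

theorem Relation.ReflTransGen.of_backward_closed {α : Type*} {r : α → α → Prop} {P : α → Prop}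
    (hP : ∀ x y, r x y → P y → P x) {a b : α} (h : Relation.ReflTransGen r a b) (hb : P b) :
    P a := by
  induction h with
  | refl => exact hb
  | tail _ hcd ih => exact ih (hP _ _ hcd hb)

theorem Matrix.exists_mulVec_eq_smul_of_mem_spectrum {n K : Type*} [Fintype n] [DecidableEq n]
    [Field K] {A : Matrix n n K} {μ : K} (h : μ ∈ spectrum K A) :
    ∃ v ≠ 0, A *ᵥ v = μ • v := by
  rw [← Matrix.spectrum_toLin', ← Module.End.hasEigenvalue_iff_mem_spectrum] at h
  obtain ⟨v, hv⟩ := h.exists_hasEigenvector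
  exact ⟨v, hv.2, hv.apply_eq_smul⟩

theorem eq_of_sum_mul_le_sum_mul {ι : Type*} {s : Finset ι} {w x : ι → ℝ} {M : ℝ}
    (hw : ∀ j ∈ s, 0 ≤ w j) (hx : ∀ j ∈ s, x j ≤ M)
    (h : ∑ j ∈ s, w j * M ≤ ∑ j ∈ s, w j * x j) {j : ι} (hj : j ∈ s) (hwj : w j ≠ 0) :
    x j = M := by
  have hle : ∀ j ∈ s, w j * x j ≤ w j * M := fun j hj =>
    mul_le_mul_of_nonneg_left (hx j hj) (hw j hj)
  have heq := (Finset.sum_eq_sum_iff_of_le hle).1 (le_antisymm (Finset.sum_le_sum hle) h) j hj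
  exact mul_left_cancel₀ hwj heq

/-- Equality case of the Geršgorin estimate, for a row of `H` at an entry `x` of maximal
modulus. -/
theorem eq_zero_and_norm_eq_of_sub_mul_eq_sum {ι : Type*} [Fintype ι] {w : ι → ℝ} {c : ℝ}
    {μ x : ℂ} {v : ι → ℂ} (hw : ∀ j, 0 ≤ w j) (hc : 0 ≤ c) (hμ : μ.re ≤ 0) (hx : x ≠ 0)
    (hv : ∀ j, ‖v j‖ ≤ ‖x‖) (h : (((∑ j, w j + c : ℝ) : ℂ) - μ) * x = ∑ j, w j * v j) :
    c = 0 ∧ ∀ j, w j ≠ 0 → ‖v j‖ = ‖x‖ := by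
  set S := ∑ j, w j
  set z : ℂ := ((S + c : ℝ) : ℂ) - μ
  have hM : 0 < ‖x‖ := norm_pos_iff.2 hx
  have hz : S + c ≤ ‖z‖ := by
    refine le_trans ?_ (Complex.re_le_norm z)
    simp only [z, Complex.sub_re, Complex.ofReal_re]
    linarith
  have htriangle : ‖z‖ * ‖x‖ ≤ ∑ j, w j * ‖v j‖ := by
    rw [← norm_mul, h]
    refine (norm_sum_le _ _).trans_eq (Finset.sum_congr rfl fun j _ => ?_)
    rw [norm_mul, Complex.norm_real, Real.norm_of_nonneg (hw j)]
  have hmaximal : ∑ j, w j * ‖v j‖ ≤ S * ‖x‖ := by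
    rw [Finset.sum_mul]
    exact Finset.sum_le_sum fun j _ => mul_le_mul_of_nonneg_left (hv j) (hw j)
  refine ⟨?_, fun j hj => ?_⟩
  · have : (S + c) * ‖x‖ ≤ S * ‖x‖ :=
      (mul_le_mul_of_nonneg_right hz hM.le).trans (htriangle.trans hmaximal)
    nlinarith
  · refine eq_of_sum_mul_le_sum_mul (fun j _ => hw j) (fun j _ => hv j) ?_ (mem_univ j) hj
    calc ∑ j, w j * ‖x‖ = S * ‖x‖ := (Finset.sum_mul _ _ _).symm
      _ ≤ ‖z‖ * ‖x‖ := mul_le_mul_of_nonneg_right (by linarith) hM.le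
      _ ≤ ∑ j, w j * ‖v j‖ := htriangle

section StructureMatrix

variable {n : Type*} [Fintype n] [DecidableEq n]

/-- `H = L + D`, where `a i j` is the weight of the edge `j → i` between followers and `d i`
the weight of the edge from the leader to `i`. -/
def structureMatrix (a : n → n → ℝ) (d : n → ℝ) : Matrix n n ℝ :=
  diagonal (fun i => ∑ j ∈ univ.erase i, a i j) - of a + diagonal d

/-- The extended graph on `Option n`, the leader being `none`. -/
def leaderGraph (a : n → n → ℝ) (d : n → ℝ) : Option n → Option n → Prop
  | none, some i => d i ≠ 0
  | some j, some i => a i j ≠ 0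
  | _, none => False

theorem structureMatrix_eq {a : n → n → ℝ} (d : n → ℝ) (ha0 : ∀ i, a i i = 0) :
    structureMatrix a d = diagonal (fun i => ∑ j, a i j + d i) - of a := by
  simp only [structureMatrix, Finset.sum_erase _ (ha0 _), ← diagonal_add]
  abel

theorem structureMatrix_row_eq {a : n → n → ℝ} {d : n → ℝ} (ha0 : ∀ i, a i i = 0)
    {μ : ℂ} {v : n → ℂ} (h : (structureMatrix a d).map Complex.ofReal *ᵥ v = μ • v) (i : n) :
    (((∑ j, a i j + d i : ℝ) : ℂ) - μ) * v i = ∑ j, (a i j : ℂ) * v j := by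
  have hi := congrFun h i
  rw [structureMatrix_eq d ha0, Matrix.map_sub _ Complex.ofReal_sub, diagonal_map (by simp),
    sub_mulVec, Pi.sub_apply, mulVec_diagonal] at hi
  simp only [Pi.smul_apply, smul_eq_mul, mulVec, dotProduct, map_apply, of_apply] at hi
  linear_combination hi

theorem re_pos_of_mem_spectrum_structureMatrix {a : n → n → ℝ} {d : n → ℝ}
    (ha : ∀ i j, 0 ≤ a i j) (ha0 : ∀ i, a i i = 0) (hd : ∀ i, 0 ≤ d i)
    (hconn : ∀ i, Relation.ReflTransGen (leaderGraph a d) none (some i)) {μ : ℂ}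
    (hμ : μ ∈ spectrum ℂ ((structureMatrix a d).map Complex.ofReal)) : 0 < μ.re := by
  obtain ⟨v, hv0, hv⟩ := exists_mulVec_eq_smul_of_mem_spectrum hμ
  by_contra! hre
  obtain ⟨k, hk⟩ := Function.ne_iff.1 hv0
  obtain ⟨i₀, -, hmax⟩ := Finset.exists_max_image univ (fun i => ‖v i‖) ⟨k, mem_univ k⟩
  have hM : 0 < ‖v i₀‖ := (norm_pos_iff.2 hk).trans_le (hmax k (mem_univ k))
  have hclosed : ∀ x y, leaderGraph a d x y →
      (∃ i, y = some i ∧ ‖v i‖ = ‖v i₀‖) → ∃ j, x = some j ∧ ‖v j‖ = ‖v i₀‖ := by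
    rintro x _ hxy ⟨i, rfl, hi⟩
    have hvi : v i ≠ 0 := norm_pos_iff.1 (hi ▸ hM)
    obtain ⟨hdi, hin⟩ := eq_zero_and_norm_eq_of_sub_mul_eq_sum (ha i) (hd i) hre hvi
      (fun j => hi ▸ hmax j (mem_univ j)) (structureMatrix_row_eq ha0 hv i)
    cases x with
    | none => exact absurd hdi hxy
    | some j => exact ⟨j, rfl, (hin j hxy).trans hi⟩
  obtain ⟨_, ⟨⟩, -⟩ := (hconn i₀).of_backward_closed hclosed ⟨i₀, rfl, rfl⟩

end StructureMatrix

/-- let `H = L + D` be the structure matrix of a leader-follower graph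
(adjacency `a` for the followers, `a i j = 1` iff `(j,i)` is an edge, and `D = diag d`
recording the edges from the leader node `0`).  If the leader node `0` is reachable to
every other node by a directed path, then every eigenvalue of `H` has strictly
positive real part. -/
theorem structure_matrix_spectrum_pos_re {N : ℕ}
    (a : Fin N → Fin N → ℝ) (ha : ∀ i j, a i j = 0 ∨ a i j = 1) (ha0 : ∀ i, a i i = 0)
    (d : Fin N → ℝ) (hd : ∀ i, d i = 0 ∨ d i = 1)
    (hconn : ∀ i : Fin N,
      Relation.ReflTransGen
        (fun u v : Option (Fin N) =>
          match u, v with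
          | none, some i => d i = 1
          | some j, some i => a i j = 1
          | _, none => False)
        none (some i)) :
    ∀ μ ∈ spectrum ℂ
      ((Matrix.diagonal (fun i => ∑ j ∈ Finset.univ.erase i, a i j) - Matrix.of a
          + Matrix.diagonal d).map (Complex.ofReal)),
      0 < μ.re := by
  intro μ hμ
  refine re_pos_of_mem_spectrum_structureMatrix (fun i j => ?_) ha0 (fun i => ?_)
    (fun i => Relation.ReflTransGen.mono ?_ _ _ (hconn i)) hμ
  · rcases ha i j with h | h <;> simp [h]
  · rcases hd i with h | h <;> simp [h]
  · rintro (_ | j) (_ | i) h <;> simp_all [leaderGraph]
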